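/- The dual (σ_Z-logical) distance of the toric code on the n×n toric lattice equals n: the minimum cardinality of a 1-cocycle T with |T ∩ L_0| odd is exactly n. In particular every such cocycle has at least n edges, and the cut C_0 is a 1-cocycle of cardinality n with |C_0 ∩ L_0| = 1. -/

import Mathlib

/-- The boundary of a face `f` of the `n × n` toric lattice: the four edges bounding `f`. -/
def toricFaceBd (n : ℕ) (f : ZMod n × ZMod n) : Set ((ZMod n × ZMod n) × Fin 2) :=
  {(f, 0), (f, 1), (f + (0, 1), 0), (f + (1, 0), 1)}

/-- `T` is a 1-cocycle of the toric lattice: it meets every face boundary in an even number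
of edges. -/
def toricIsCocycle (n : ℕ) (T : Set ((ZMod n × ZMod n) × Fin 2)) : Prop :=
  ∀ f : ZMod n × ZMod n, Even ((T ∩ toricFaceBd n f).ncard)

/-- The vertical cut `C_x`: all horizontal (direction-0) edges with first coordinate `x`. -/
def toricCut (n : ℕ) (x : ZMod n) : Set ((ZMod n × ZMod n) × Fin 2) :=
  {e | ∃ y : ZMod n, e = ((x, y), 0)}

/-- The horizontal loop `L_y`: all horizontal (direction-0) edges with second coordinate `y`. -/
def toricLoop (n : ℕ) (y : ZMod n) : Set ((ZMod n × ZMod n) × Fin 2) :=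
  {e | ∃ x : ZMod n, e = ((x, y), 0)}

/-!
Summing the cocycle condition over the row of faces between the loops `L_y` and `L_{y+1}`
counts every vertical edge of that row twice, so `|T ∩ L_y|` and `|T ∩ L_{y+1}|` have the same
parity. A cocycle meeting `L_0` oddly therefore meets each of the `n` disjoint loops `L_y`, and
so has at least `n` edges; the cut `C_0` attains this bound.
-/

open Finset

theorem Set.ncard_inter_coe_eq_sum_indicator {α : Type*} (T : Set α) (s : Finset α) :
    (T ∩ ↑s).ncard = ∑ e ∈ s, T.indicator 1 e := by
  classical
  rw [show T ∩ ↑s = ↑(s.filter (· ∈ T)) by ext; simp [and_comm], Set.ncard_coe_finset,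
    Finset.card_filter]
  simp [Set.indicator_apply]

abbrev ToricEdge (n : ℕ) := (ZMod n × ZMod n) × Fin 2

variable {n : ℕ}

@[simp]
theorem mem_toricLoop {y : ZMod n} {e : ToricEdge n} :
    e ∈ toricLoop n y ↔ e.1.2 = y ∧ e.2 = 0 := by
  obtain ⟨⟨a, b⟩, i⟩ := e
  simp [toricLoop, Prod.ext_iff, eq_comm]

@[simp]
theorem mem_toricCut {x : ZMod n} {e : ToricEdge n} :
    e ∈ toricCut n x ↔ e.1.1 = x ∧ e.2 = 0 := by
  obtain ⟨⟨a, b⟩, i⟩ := e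
  simp [toricCut, Prod.ext_iff, eq_comm]

theorem ncard_inter_toricLoop [NeZero n] (T : Set (ToricEdge n)) (y : ZMod n) :
    (T ∩ toricLoop n y).ncard = ∑ x, T.indicator 1 ((x, y), 0) := by
  have hloop : toricLoop n y = ↑(univ.image fun x : ZMod n => (((x, y), 0) : ToricEdge n)) := by
    ext ⟨⟨a, b⟩, i⟩
    simp [and_comm, eq_comm]
  rw [hloop, Set.ncard_inter_coe_eq_sum_indicator, sum_image fun a _ b _ h => by simpa using h]

theorem ncard_inter_toricFaceBd [Fact (1 < n)] (T : Set (ToricEdge n)) (f : ZMod n × ZMod n) :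
    (T ∩ toricFaceBd n f).ncard = T.indicator 1 (f, 0) + T.indicator 1 (f, 1) +
      T.indicator 1 (f + (0, 1), 0) + T.indicator 1 (f + (1, 0), 1) := by
  have hbd : toricFaceBd n f =
      ↑({(f, 0), (f, 1), (f + (0, 1), 0), (f + (1, 0), 1)} : Finset (ToricEdge n)) := by
    simp [toricFaceBd]
  rw [hbd, Set.ncard_inter_coe_eq_sum_indicator, sum_insert (by simp [Prod.ext_iff]),
    sum_insert (by simp [Prod.ext_iff]), sum_insert (by simp [Prod.ext_iff]), sum_singleton]
  ring

theorem toricIsCocycle.even_add_ncard_inter_toricLoop [Fact (1 < n)] {T : Set (ToricEdge n)}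
    (hT : toricIsCocycle n T) (y : ZMod n) :
    Even ((T ∩ toricLoop n y).ncard + (T ∩ toricLoop n (y + 1)).ncard) := by
  have hrow : Even (∑ x, (T ∩ toricFaceBd n (x, y)).ncard) := even_sum _ fun x _ => hT (x, y)
  have hshift : ∑ x, T.indicator 1 ((x + 1, y), 1) =
      ∑ x, T.indicator (1 : ToricEdge n → ℕ) ((x, y), 1) :=
    Fintype.sum_equiv (Equiv.addRight 1) _ _ fun _ => rfl
  simp only [ncard_inter_toricFaceBd, sum_add_distrib, Prod.mk_add_mk, add_zero, hshift] at hrow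
  rw [ncard_inter_toricLoop, ncard_inter_toricLoop]
  rw [show ∀ a v b : ℕ, a + v + b + v = a + b + (v + v) by intros; ring, Nat.even_add] at hrow
  exact hrow.mpr (Even.add_self _)

theorem toricIsCocycle.odd_ncard_inter_toricLoop [Fact (1 < n)] {T : Set (ToricEdge n)}
    (hT : toricIsCocycle n T) (h0 : Odd (T ∩ toricLoop n 0).ncard) (y : ZMod n) :
    Odd (T ∩ toricLoop n y).ncard := by
  rw [← ZMod.natCast_zmod_val y]
  induction y.val with
  | zero => simpa using h0
  | succ k ih =>
    rw [← Nat.not_even_iff_odd] at ih ⊢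
    push_cast
    exact fun h => ih ((Nat.even_add.mp (hT.even_add_ncard_inter_toricLoop k)).mpr h)

theorem toricIsCocycle.le_ncard [Fact (1 < n)] {T : Set (ToricEdge n)}
    (hT : toricIsCocycle n T) (h0 : Odd (T ∩ toricLoop n 0).ncard) : n ≤ T.ncard := by
  have hrow (y : ZMod n) : (T ∩ toricLoop n y).Nonempty :=
    Set.nonempty_of_ncard_ne_zero (hT.odd_ncard_inter_toricLoop h0 y).pos.ne'
  choose e he using hrow
  have hy (y : ZMod n) : (e y).1.2 = y := (mem_toricLoop.mp (he y).2).1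
  calc n = (Set.univ : Set (ZMod n)).ncard := by simp
    _ ≤ T.ncard := Set.ncard_le_ncard_of_injOn e (fun y _ => (he y).1)
      fun a _ b _ hab => by rw [← hy a, hab, hy b]

theorem toricIsCocycle_toricCut [Fact (1 < n)] (x : ZMod n) :
    toricIsCocycle n (toricCut n x) := by
  intro f
  rw [ncard_inter_toricFaceBd]
  have hsame : (toricCut n x).indicator 1 (f + (0, 1), 0) =
      (toricCut n x).indicator (1 : ToricEdge n → ℕ) (f, 0) :=
    Set.indicator_eq_indicator (by simp) rfl
  simp [hsame]

theorem ncard_toricCut (x : ZMod n) : (toricCut n x).ncard = n := by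
  have hcut : toricCut n x = Set.range fun y : ZMod n => (((x, y), 0) : ToricEdge n) := by
    ext ⟨⟨a, b⟩, i⟩
    simp [and_comm, eq_comm]
  rw [hcut, Set.ncard_range_of_injective fun a b h => by simpa using h, Nat.card_zmod]

theorem toricCut_inter_toricLoop (x y : ZMod n) :
    toricCut n x ∩ toricLoop n y = {((x, y), 0)} := by
  ext ⟨⟨a, b⟩, i⟩
  simp [and_assoc]

/-- The dual (σ_Z-logical) distance of the toric code equals `n`: the least cardinality of a
1-cocycle meeting the loop `L_0` an odd number of times is `n`, and the cut `C_0` is a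
1-cocycle of cardinality `n` meeting `L_0` in exactly one edge. -/
theorem toric_code_dual_distance (n : ℕ) (hn : 2 ≤ n) :
    IsLeast {k : ℕ | ∃ T : Set ((ZMod n × ZMod n) × Fin 2),
        toricIsCocycle n T ∧ Odd ((T ∩ toricLoop n 0).ncard) ∧ T.ncard = k} n ∧
    toricIsCocycle n (toricCut n 0) ∧ (toricCut n 0).ncard = n ∧
    (toricCut n 0 ∩ toricLoop n 0).ncard = 1 := by
  have : Fact (1 < n) := ⟨hn⟩
  have hcut : toricIsCocycle n (toricCut n 0) := toricIsCocycle_toricCut 0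
  have hmeet : (toricCut n 0 ∩ toricLoop n 0).ncard = 1 := by
    rw [toricCut_inter_toricLoop, Set.ncard_singleton]
  refine ⟨⟨⟨toricCut n 0, hcut, hmeet ▸ odd_one, ncard_toricCut 0⟩, ?_⟩,
    hcut, ncard_toricCut 0, hmeet⟩
  rintro k ⟨T, hT, hodd, rfl⟩
  exact hT.le_ncard hodd
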